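/- arXiv:1008.0155 — 8 statements merged into one kernel-verified Lean document; each statement's English description precedes it below -/
import Mathlib

section
/- If k ≥ 1 is a natural number such that 3^k - 2 is a prime number, then the number n = 3^(k-1) · (3^k - 2) is 2-hyperperfect, i.e., σ(n) = (3/2)·n + 1/2, equivalently 2·σ(n) = 3·n + 1. -/
lemma geom_aux (k : ℕ) : 2 * ∑ x ∈ Finset.range k, 3 ^ x + 1 = 3 ^ k := by
  induction k with
  | zero => simp
  | succ n ih => rw [Finset.sum_range_succ, pow_succ]; omega

/-- If `k ≥ 1` and `3^k - 2` is prime, then `n = 3^(k-1) * (3^k - 2)` is 2-hyperperfect,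
i.e., `2 * σ(n) = 3 * n + 1`. -/
theorem two_hyperperfect_of_prime (k : ℕ) (hk : 1 ≤ k) (hp : Nat.Prime (3 ^ k - 2)) :
    2 * (∑ d ∈ Nat.divisors (3 ^ (k - 1) * (3 ^ k - 2)), d) =
      3 * (3 ^ (k - 1) * (3 ^ k - 2)) + 1 := by
  set p := 3 ^ k - 2 with hpdef
  have h3 : 3 ≤ 3 ^ k := by
    calc 3 = 3 ^ 1 := by norm_num
    _ ≤ 3 ^ k := Nat.pow_le_pow_right (by norm_num) hk
  have hpk : p + 2 = 3 ^ k := by omega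
  have hcop3 : Nat.Coprime 3 p := by
    rw [Nat.coprime_primes (by norm_num) hp]
    have : 3 ^ k % 3 = 0 := by
      have : (3 : ℕ) ∣ 3 ^ k := dvd_pow_self 3 (by omega)
      omega
    omega
  have hcop : Nat.Coprime (3 ^ (k - 1)) p := Nat.Coprime.pow_left _ hcop3
  rw [hcop.sum_divisors_mul, Nat.sum_divisors_prime_pow (by norm_num),
    hp.divisors, Finset.sum_insert (by simp [hp.one_lt.ne]), Finset.sum_singleton]
  have hk1 : k - 1 + 1 = k := by omega
  rw [hk1]
  have hgeo := geom_aux k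
  have hsplit : 3 ^ (k - 1) * 3 = 3 ^ k := by
    rw [← pow_succ, hk1]
  set S := ∑ x ∈ Finset.range k, 3 ^ x with hS
  nlinarith [hgeo, hsplit, hpk]
end

section
/- If p is a prime number such that (3^p - 1)/2 is also prime, then the number n = 3^(p-1) is super-hyperperfect, i.e., σ(σ(n)) = (3/2)·n + 1/2, equivalently 2·σ(σ(n)) = 3·n + 1. -/
/-- If `p` and `(3^p - 1)/2` are primes, then `n = 3^(p-1)` is super-hyperperfect,
i.e., `2 * σ(σ(n)) = 3 * n + 1`. -/
theorem super_hyperperfect_of_prime (p : ℕ) (hp : Nat.Prime p)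
    (hq : Nat.Prime ((3 ^ p - 1) / 2)) :
    2 * (∑ d ∈ Nat.divisors (∑ d ∈ Nat.divisors (3 ^ (p - 1)), d), d) =
      3 * 3 ^ (p - 1) + 1 := by
  have h3 : Nat.Prime 3 := by norm_num
  have hgeom : ∀ k : ℕ, 2 * ∑ i ∈ Finset.range k, 3 ^ i = 3 ^ k - 1 := by
    intro k
    induction k with
    | zero => simp
    | succ n ih =>
      rw [Finset.sum_range_succ, Nat.mul_add, ih]
      have h1 : 1 ≤ 3 ^ n := Nat.one_le_pow _ _ (by norm_num)
      have : (3:ℕ) ^ (n+1) = 3 * 3 ^ n := by ring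
      omega
  have hs1 : ∑ d ∈ Nat.divisors (3 ^ (p - 1)), d = (3 ^ p - 1) / 2 := by
    rw [Nat.divisors_prime_pow h3, Finset.sum_map]
    simp only [Function.Embedding.coeFn_mk]
    have hp1 : p - 1 + 1 = p := Nat.succ_pred_eq_of_pos hp.pos
    rw [hp1]
    have := hgeom p
    omega
  rw [hs1, hq.divisors]
  have hodd : (3:ℕ) ^ p % 2 = 1 := by
    have : (3:ℕ) % 2 = 1 := rfl
    simp [Nat.pow_mod]
  have h1 : 1 ≤ (3:ℕ) ^ p := Nat.one_le_pow _ _ (by norm_num)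
  have hne : (1:ℕ) ≠ (3 ^ p - 1) / 2 := by
    intro h
    have := hq.two_le
    omega
  rw [Finset.sum_insert (by simpa using hne), Finset.sum_singleton]
  have hp1 : 3 * 3 ^ (p - 1) = 3 ^ p := by
    have h2 := hp.two_le
    rw [← pow_succ']
    congr 1
    omega
  omega
end

section
/- A positive even integer n is superperfect if and only if n = 2^(p-1) for some natural number p such that 2^p - 1 is prime. -/
/-!
Write an even `n` as `2 ^ k * m` with `k ≥ 1` and `m` odd, so that `σ n = M * σ m` with
`M = 2 ^ (k + 1) - 1 > 1`. If `m > 1`, then `1`, `σ m` and `M * σ m` are distinct divisors of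
`σ n`, whence `σ (σ n) > (M + 1) * σ m > 2 ^ (k + 1) * m = 2 * n`. So `m = 1`, and
`σ (σ n) = σ M = M + 1` says exactly that `M` is prime.
-/

open ArithmeticFunction
open scoped ArithmeticFunction.sigma

namespace Nat

theorem sigma_one_eq_add_one_iff_prime {n : ℕ} : σ 1 n = n + 1 ↔ n.Prime := by
  rw [sigma_one_apply, sum_divisors_eq_sum_properDivisors_add_self, add_comm,
    add_left_cancel_iff, sum_properDivisors_eq_one_iff_prime]

theorem lt_sigma_one {n : ℕ} (hn : 1 < n) : n < σ 1 n := by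
  rw [sigma_one_apply, sum_divisors_eq_sum_properDivisors_add_self]
  have : 1 ≤ ∑ i ∈ n.properDivisors, i :=
    Finset.single_le_sum (f := fun i ↦ i) (fun _ _ ↦ zero_le _)
      (one_mem_properDivisors_iff_one_lt.mpr hn)
  omega

theorem add_one_mul_lt_sigma_one_mul {a b : ℕ} (ha : 1 < a) (hb : 1 < b) :
    (a + 1) * b < σ 1 (a * b) := by
  have hab : b < a * b := lt_mul_left (by omega) ha
  have hab0 : a * b ≠ 0 := by positivity
  have hsub : ({1, b, a * b} : Finset ℕ) ⊆ (a * b).divisors := by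
    simp [Finset.insert_subset_iff, hab0]
  calc (a + 1) * b < 1 + b + a * b := by rw [add_one_mul]; omega
    _ = ∑ d ∈ {1, b, a * b}, d := by
      rw [Finset.sum_insert (by simp only [Finset.mem_insert, Finset.mem_singleton]; omega),
        Finset.sum_insert (by simp only [Finset.mem_singleton]; omega),
        Finset.sum_singleton, add_assoc]
    _ ≤ σ 1 (a * b) := sigma_one_apply (a * b) ▸ Finset.sum_le_sum_of_subset hsub

theorem sigma_one_two_pow (k : ℕ) : σ 1 (2 ^ k) = mersenne (k + 1) := by
  rw [sigma_one_apply_prime_pow prime_two, geomSum_eq le_rfl, Nat.div_one, mersenne]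

theorem sigma_one_two_pow_mul_of_odd (k : ℕ) {m : ℕ} (hm : Odd m) :
    σ 1 (2 ^ k * m) = mersenne (k + 1) * σ 1 m := by
  rw [isMultiplicative_sigma.map_mul_of_coprime ((coprime_two_left.mpr hm).pow_left k),
    sigma_one_two_pow]

theorem sigma_one_sigma_one_two_pow_eq_iff (k : ℕ) :
    σ 1 (σ 1 (2 ^ k)) = 2 ^ (k + 1) ↔ (mersenne (k + 1)).Prime := by
  rw [sigma_one_two_pow, ← succ_mersenne, sigma_one_eq_add_one_iff_prime]

theorem two_mul_lt_sigma_one_sigma_one_two_pow_mul {k m : ℕ} (hk : k ≠ 0) (hm : Odd m)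
    (hm1 : 1 < m) : 2 * (2 ^ k * m) < σ 1 (σ 1 (2 ^ k * m)) := by
  have hM : 1 < mersenne (k + 1) := one_lt_mersenne.mpr (by omega)
  rw [← mul_assoc, ← pow_succ', ← succ_mersenne, sigma_one_two_pow_mul_of_odd k hm]
  calc (mersenne (k + 1) + 1) * m < (mersenne (k + 1) + 1) * σ 1 m :=
        Nat.mul_lt_mul_of_pos_left (lt_sigma_one hm1) (by omega)
    _ < σ 1 (mersenne (k + 1) * σ 1 m) :=
        add_one_mul_lt_sigma_one_mul hM (hm1.trans (lt_sigma_one hm1))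

theorem eq_one_of_odd_of_mul_eq_two_pow {k m j : ℕ} (hm : Odd m) (h : 2 ^ k * m = 2 ^ j) :
    m = 1 :=
  ((coprime_two_right.mpr hm).pow_right j).eq_one_of_dvd (Dvd.intro_left _ h)

end Nat

/-- A positive even integer `n` is superperfect iff `n = 2^(p-1)` for some `p` with
`2^p - 1` prime. -/
theorem even_superperfect_iff (n : ℕ) (hn : 0 < n) (heven : Even n) :
    (∑ d ∈ Nat.divisors (∑ d ∈ Nat.divisors n, d), d) = 2 * n ↔
      ∃ p : ℕ, Nat.Prime (2 ^ p - 1) ∧ n = 2 ^ (p - 1) := by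
  simp only [← sigma_one_apply]
  obtain ⟨k, m, hm, rfl⟩ := Nat.exists_eq_two_pow_mul_odd hn.ne'
  have hk : k ≠ 0 := by
    rintro rfl
    exact Nat.not_even_iff_odd.mpr hm (by simpa using heven)
  obtain rfl | hm1 := (show 1 ≤ m from hm.pos).eq_or_lt
  · rw [mul_one, ← pow_succ', Nat.sigma_one_sigma_one_two_pow_eq_iff]
    refine ⟨fun h ↦ ⟨k + 1, h, rfl⟩, fun ⟨p, hp, hkp⟩ ↦ ?_⟩
    have hp1 := (Nat.Prime.of_mersenne hp).one_lt
    have hk_eq : k = p - 1 := Nat.pow_right_injective le_rfl hkp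
    rwa [show k + 1 = p by omega]
  · refine iff_of_false (Nat.two_mul_lt_sigma_one_sigma_one_two_pow_mul hk hm hm1).ne' ?_
    rintro ⟨p, -, h⟩
    exact hm1.ne' (Nat.eq_one_of_odd_of_mul_eq_two_pow hm h)
end

section
/- If k > 1 is an odd integer such that p = (3k+1)/2 and q = 3k+4 are both prime numbers, then the number n = p²·q is k-hyperperfect, i.e., k·σ(n) = (k+1)·n + (k-1). -/
/-- If `k > 1` is odd and `p = (3k+1)/2` and `q = 3k+4` are primes, then `n = p^2 * q`
is `k`-hyperperfect, i.e., `k * σ(n) = (k+1) * n + (k-1)`. -/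
theorem hyperperfect_p_sq_q (k : ℕ) (hk : 1 < k) (hodd : Odd k)
    (hp : Nat.Prime ((3 * k + 1) / 2)) (hq : Nat.Prime (3 * k + 4)) :
    k * (∑ d ∈ Nat.divisors (((3 * k + 1) / 2) ^ 2 * (3 * k + 4)), d) =
      (k + 1) * (((3 * k + 1) / 2) ^ 2 * (3 * k + 4)) + (k - 1) := by
  obtain ⟨m, hm⟩ := hodd
  have hpval : (3 * k + 1) / 2 = 3 * m + 2 := by omega
  rw [hpval] at hp ⊢
  have hcop : Nat.Coprime ((3 * m + 2) ^ 2) (3 * k + 4) := by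
    refine (Nat.coprime_primes hp hq).mpr (by omega) |>.pow_left 2
  rw [hcop.sum_divisors_mul]
  rw [show (∑ d ∈ Nat.divisors ((3 * m + 2) ^ 2), d) = ArithmeticFunction.sigma 1 ((3 * m + 2) ^ 2) from (ArithmeticFunction.sigma_one_apply _).symm,
    ArithmeticFunction.sigma_one_apply_prime_pow hp,
    Nat.sum_divisors_eq_sum_properDivisors_add_self, hq.sum_properDivisors]
  rw [Finset.sum_range_succ, Finset.sum_range_succ, Finset.sum_range_one]
  subst hm
  ring_nf
  omega
end

section
/- If p and q are distinct odd prime numbers and k is a positive integer such that k·(p+q) = p·q - 1, then the number n = p·q is k-hyperperfect, i.e., k·σ(n) = (k+1)·n + (k-1). -/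
/-- If `p` and `q` are distinct odd primes and `k > 0` satisfies `k * (p + q) = p * q - 1`,
then `n = p * q` is `k`-hyperperfect, i.e., `k * σ(n) = (k+1) * n + (k-1)`. -/
theorem hyperperfect_pq (p q k : ℕ) (hp : Nat.Prime p) (hq : Nat.Prime q)
    (hpodd : Odd p) (hqodd : Odd q) (hpq : p ≠ q) (hk : 0 < k)
    (h : k * (p + q) = p * q - 1) :
    k * (∑ d ∈ Nat.divisors (p * q), d) = (k + 1) * (p * q) + (k - 1) := by
  have hcop : Nat.Coprime p q := (Nat.coprime_primes hp hq).2 hpq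
  have hs : (∑ d ∈ Nat.divisors (p * q), d) = (1 + p) * (1 + q) := by
    rw [Nat.Coprime.sum_divisors_mul hcop, hp.divisors, hq.divisors]
    rw [Finset.sum_pair hp.one_lt.ne, Finset.sum_pair hq.one_lt.ne]
  rw [hs]
  have hpq1 : 4 ≤ p * q := Nat.mul_le_mul hp.two_le hq.two_le
  have h' : k * (p + q) + 1 = p * q := by omega
  have h1 : k * ((1+p)*(1+q)) = k + k*(p+q) + k*(p*q) := by ring
  have h2 : (k+1)*(p*q) = p*q + k*(p*q) := by ring
  omega
end

section
/- Let k > 0 be an integer such that p = k + 1 is a prime number, and let i > 1 be an integer such that q = p^i - p + 1 is prime. Then the number n = p^(i-1)·q is k-hyperperfect, i.e., k·σ(n) = (k+1)·n + (k-1). -/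
/-- If `k > 0`, `p = k + 1` is prime, `i > 1`, and `q = p^i - p + 1` is prime, then
`n = p^(i-1) * q` is `k`-hyperperfect, i.e., `k * σ(n) = (k+1) * n + (k-1)`. -/
theorem hyperperfect_prime_power (k i : ℕ) (hk : 0 < k) (hp : Nat.Prime (k + 1))
    (hi : 1 < i) (hq : Nat.Prime ((k + 1) ^ i - (k + 1) + 1)) :
    k * (∑ d ∈ Nat.divisors ((k + 1) ^ (i - 1) * ((k + 1) ^ i - (k + 1) + 1)), d) =
      (k + 1) * ((k + 1) ^ (i - 1) * ((k + 1) ^ i - (k + 1) + 1)) + (k - 1) := by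
  set q := (k + 1) ^ i - (k + 1) + 1 with hqdef
  have hple : (k + 1) ≤ (k + 1) ^ i := Nat.le_self_pow (by omega) _
  have h2le : (k + 1) ^ 2 ≤ (k + 1) ^ i := Nat.pow_le_pow_right (by omega) hi
  have h2 : (k + 1) ^ 2 = k * k + 2 * k + 1 := by ring
  have h3 : 2 * (k + 1) ≤ (k + 1) ^ 2 := by nlinarith
  have hqgt : (k + 1) < q := by omega
  have hcop : Nat.Coprime ((k + 1) ^ (i - 1)) q :=
    Nat.Coprime.pow_left _ ((Nat.coprime_primes hp hq).mpr (by omega))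
  rw [hcop.sum_divisors_mul, ← ArithmeticFunction.sigma_one_apply ((k+1)^(i-1)),
    ArithmeticFunction.sigma_one_apply_prime_pow hp, hq.divisors]
  rw [Finset.sum_pair (by omega : (1:ℕ) ≠ q)]
  have hrange : i - 1 + 1 = i := by omega
  rw [hrange]
  have hpow : (k + 1) ^ (i - 1) * (k + 1) = (k + 1) ^ i := by
    rw [← pow_succ, hrange]
  have hgeom : k * (∑ j ∈ Finset.range i, (k + 1) ^ j) + 1 = (k + 1) ^ i := by
    zify
    have := geom_sum_mul ((k : ℤ) + 1) i
    push_cast at this ⊢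
    linarith
  zify [hple, hk]
  have hq' : (q : ℤ) = ((k : ℤ) + 1) ^ i - (k + 1) + 1 := by
    rw [hqdef]; zify [hple]
  have hpow' : ((k : ℤ) + 1) ^ (i - 1) * ((k : ℤ) + 1) = ((k : ℤ) + 1) ^ i := by
    exact_mod_cast congrArg (Nat.cast : ℕ → ℤ) hpow
  have hgeom' : (k : ℤ) * (∑ j ∈ Finset.range i, ((k : ℤ) + 1) ^ j) + 1 = ((k : ℤ) + 1) ^ i := by
    exact_mod_cast congrArg (Nat.cast : ℕ → ℤ) hgeom
  nlinarith [hq', hpow', hgeom']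
end

section
/- Every odd perfect number n satisfies n ≡ 1 (mod 12) or n ≡ 9 (mod 36). -/
/-!
If a prime `q` occurs in `n` to an odd power `a`, then `σ(q^a) = 1 + q + ⋯ + q^a` has an even
number of terms and is divisible by `q + 1`; as `σ(q^a) ∣ σ(n) = 2n`, this gives `q + 1 ∣ 2n`.
For odd `n` this rules out odd exponents at primes `q ≡ -1 (mod 4)`, and, when `3 ∤ n`, at primes
`q ≡ -1 (mod 3)`. Since the units modulo 3 and 4 are `±1`, the remaining prime powers are all
`≡ 1`, so `n ≡ 1 (mod 4)`, and `n ≡ 1 (mod 3)` unless `3 ∣ n`. In the latter case `3 ≡ -1 (mod 4)`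
occurs to an even power, so `9 ∣ n`.
-/

open Nat ArithmeticFunction Finset
open scoped ArithmeticFunction.sigma

lemma succ_dvd_sigma_one_prime_pow {q a : ℕ} (hq : q.Prime) (ha : Odd a) :
    q + 1 ∣ σ 1 (q ^ a) := by
  rw [sigma_one_apply_prime_pow hq, ← ZMod.natCast_eq_zero_iff]
  have hq' : (q : ZMod (q + 1)) = -1 := eq_neg_of_add_eq_zero_left (ZMod.natCast_self' q)
  push_cast
  rw [hq', neg_one_geom_sum, if_pos (by simpa [Nat.even_add_one] using ha)]

lemma sigma_one_ordProj_dvd {p n : ℕ} (hp : p.Prime) (hn : n ≠ 0) :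
    σ 1 (p ^ n.factorization p) ∣ σ 1 n := by
  have hco : Nat.Coprime (p ^ n.factorization p) (ordCompl[p] n) :=
    (Nat.coprime_ordCompl hp hn).pow_left _
  have h := (isMultiplicative_sigma (k := 1)).map_mul_of_coprime hco
  rw [Nat.ordProj_mul_ordCompl_eq_self n p] at h
  exact ⟨_, h⟩

lemma succ_dvd_sigma_one_of_odd_factorization {q n : ℕ} (hq : q.Prime)
    (ha : Odd (n.factorization q)) : q + 1 ∣ σ 1 n := by
  have hn : n ≠ 0 := by
    rintro rfl
    simp at ha
  exact (succ_dvd_sigma_one_prime_pow hq ha).trans (sigma_one_ordProj_dvd hq hn)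

lemma even_factorization_of_natCast_eq_neg_one {m n q : ℕ} (hσ : σ 1 n = 2 * n)
    (hm : ¬ m ∣ 2 * n) (hq : q.Prime) (hqm : (q : ZMod m) = -1) :
    Even (n.factorization q) := by
  by_contra hodd
  have hmq : m ∣ q + 1 := by
    rw [← ZMod.natCast_eq_zero_iff]
    push_cast
    rw [hqm, neg_add_cancel]
  exact hm (hσ ▸ hmq.trans (succ_dvd_sigma_one_of_odd_factorization hq
    (Nat.not_even_iff_odd.mp hodd)))

lemma natCast_eq_one_of_forall_primeFactors {R : Type*} [CommRing R] {n : ℕ} (hn : n ≠ 0)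
    (h : ∀ p ∈ n.primeFactors, (p : R) = 1 ∨ ((p : R) = -1 ∧ Even (n.factorization p))) :
    (n : R) = 1 := by
  conv_lhs => rw [← Nat.prod_factorization_pow_eq_self hn]
  rw [Finsupp.prod, Nat.cast_prod]
  refine Finset.prod_eq_one fun p hp => ?_
  rw [Nat.cast_pow]
  rcases h p hp with h1 | ⟨h1, he⟩
  · rw [h1, one_pow]
  · rw [h1, he.neg_one_pow]

lemma natCast_eq_one_of_sigma_one_eq_two_mul {m n : ℕ} (hσ : σ 1 n = 2 * n) (hn : n ≠ 0)
    (hm : ¬ m ∣ 2 * n)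
    (hunit : ∀ p ∈ n.primeFactors, (p : ZMod m) = 1 ∨ (p : ZMod m) = -1) :
    (n : ZMod m) = 1 :=
  natCast_eq_one_of_forall_primeFactors hn fun p hp => (hunit p hp).imp_right fun hp' =>
    ⟨hp', even_factorization_of_natCast_eq_neg_one hσ hm (Nat.prime_of_mem_primeFactors hp) hp'⟩

lemma ZMod.natCast_four_eq_one_or_neg_one {p : ℕ} (hp : Odd p) :
    (p : ZMod 4) = 1 ∨ (p : ZMod 4) = -1 := by
  rw [← ZMod.natCast_mod]
  have : p % 4 = 1 ∨ p % 4 = 3 := by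
    have := Nat.odd_iff.mp hp
    omega
  rcases this with h | h <;> rw [h] <;> decide

lemma ZMod.natCast_three_eq_one_or_neg_one {p : ℕ} (hp : ¬ 3 ∣ p) :
    (p : ZMod 3) = 1 ∨ (p : ZMod 3) = -1 := by
  rw [← ZMod.natCast_mod]
  have : p % 3 = 1 ∨ p % 3 = 2 := by omega
  rcases this with h | h <;> rw [h] <;> decide

theorem odd_perfect_mod_general (n : ℕ) (hodd : Odd n)
    (hperf : (∑ d ∈ Nat.divisors n, d) = 2 * n) :
    n % 12 = 1 ∨ n % 36 = 9 := by
  have hσ : σ 1 n = 2 * n := by rwa [sigma_one_apply]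
  have hn : n ≠ 0 := hodd.pos.ne'
  have hn2 : n % 2 = 1 := Nat.odd_iff.mp hodd
  have h4 : n % 4 = 1 % 4 := by
    have h := natCast_eq_one_of_sigma_one_eq_two_mul (m := 4) hσ hn (by omega) fun p hp =>
      ZMod.natCast_four_eq_one_or_neg_one (hodd.of_dvd_nat (Nat.dvd_of_mem_primeFactors hp))
    exact (ZMod.natCast_eq_natCast_iff' n 1 4).mp (by rwa [Nat.cast_one])
  by_cases h3 : 3 ∣ n
  · have hpos : 0 < n.factorization 3 := prime_three.factorization_pos_of_dvd hn h3
    have heven : Even (n.factorization 3) :=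
      even_factorization_of_natCast_eq_neg_one hσ (m := 4) (by omega) prime_three (by decide)
    have h9 : 3 ^ 2 ∣ n := (prime_three.pow_dvd_iff_le_factorization hn).mpr (by
      obtain ⟨k, hk⟩ := heven
      omega)
    omega
  · have h := natCast_eq_one_of_sigma_one_eq_two_mul (m := 3) hσ hn (by omega) fun p hp =>
      ZMod.natCast_three_eq_one_or_neg_one fun h3p =>
        h3 (h3p.trans (Nat.dvd_of_mem_primeFactors hp))
    have h3' : n % 3 = 1 % 3 := (ZMod.natCast_eq_natCast_iff' n 1 3).mp (by rwa [Nat.cast_one])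
    omega

/-- Every odd perfect number `n` satisfies `n ≡ 1 (mod 12)` or `n ≡ 9 (mod 36)`. -/
theorem odd_perfect_mod (n : ℕ) (hn : 0 < n) (hodd : Odd n)
    (hperf : (∑ d ∈ Nat.divisors n, d) = 2 * n) :
    n % 12 = 1 ∨ n % 36 = 9 :=
  odd_perfect_mod_general n hodd hperf
end

section
/- Every odd superperfect number is a perfect square, i.e., if n is odd and σ(σ(n)) = 2n, then there exists a natural number m with n = m². -/
/-!
For odd `n` every divisor is odd, so `σ n ≡ #n.divisors (mod 2)`, and an odd number of divisors
`∏ (eₚ + 1)` means that every exponent `eₚ` is even. It remains to see that `σ n` cannot be even,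
which comes from comparing the sizes of `σ n` and `σ m`, where `m` is the odd part of `σ n`.
-/

open Finset ArithmeticFunction
open scoped ArithmeticFunction.sigma

namespace Nat

theorem exists_eq_sq_of_forall_even_factorization {n : ℕ} (hn : n ≠ 0)
    (h : ∀ p, Even (n.factorization p)) : ∃ m : ℕ, n = m ^ 2 := by
  refine ⟨∏ p ∈ n.primeFactors, p ^ (n.factorization p / 2), ?_⟩
  conv_lhs => rw [← prod_factorization_pow_eq_self hn, prod_factorization_eq_prod_primeFactors]
  rw [← prod_pow]
  refine prod_congr rfl fun p _ => ?_
  rw [← pow_mul, Nat.div_mul_cancel (h p).two_dvd]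

theorem exists_eq_sq_of_odd_card_divisors {n : ℕ} (h : Odd #n.divisors) :
    ∃ m : ℕ, n = m ^ 2 := by
  have hn : n ≠ 0 := by rintro rfl; simp at h
  refine exists_eq_sq_of_forall_even_factorization hn fun p => ?_
  by_cases hp : p ∈ n.primeFactors
  · by_contra hodd
    rw [not_even_iff_odd] at hodd
    rw [card_divisors hn, ← not_even_iff_odd] at h
    exact h (even_iff_two_dvd.2 (hodd.add_one.two_dvd.trans (dvd_prod_of_mem _ hp)))
  · rw [← support_factorization, Finsupp.notMem_support_iff] at hp
    simp [hp]

theorem odd_card_divisors_of_odd_sigma_one {n : ℕ} (hn : Odd n) (h : Odd (σ 1 n)) :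
    Odd #n.divisors := by
  rw [sigma_one_apply, odd_sum_iff_odd_card_odd] at h
  rwa [filter_true_of_mem fun d hd => hn.of_dvd_nat (dvd_of_mem_divisors hd)] at h

theorem sigma_one_two_pow_mul {k m : ℕ} (hm : Odd m) :
    σ 1 (2 ^ k * m) = mersenne (k + 1) * σ 1 m := by
  rw [isMultiplicative_sigma.map_mul_of_coprime (hm.coprime_two_left.pow_left k),
    sigma_one_apply_prime_pow prime_two, Nat.geomSum_eq le_rfl, mersenne, Nat.div_one]

theorem add_div_le_sigma_one {n d : ℕ} (hd : d ∣ n) (hd1 : 1 < d) : n + n / d ≤ σ 1 n := by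
  rcases eq_or_ne n 0 with rfl | hn
  · simp
  have hlt : n / d < n := div_lt_self (pos_of_ne_zero hn) hd1
  calc n + n / d = ∑ e ∈ {n, n / d}, e := (sum_pair (f := id) hlt.ne').symm
    _ ≤ σ 1 n := by
      rw [sigma_one_apply]
      refine sum_le_sum_of_subset ?_
      simp [insert_subset_iff, hn, div_dvd_of_dvd hd]

def Superperfect (n : ℕ) : Prop := σ 1 (σ 1 n) = 2 * n

/-- With `σ n = 2 ^ k * m` (`m` odd, `k ≥ 1`) and `M = 2 ^ (k + 1) - 1`, superperfectness reads
`M * σ m = 2 * n`, so `n = M * q` with `σ m = 2 * q`. Then `2 ^ k * m = σ n ≥ n + q = 2 ^ (k + 1) * q`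
gives `m ≥ 2 * q = σ m`, which forces `m = 1` and then `M = 2 * n`, against the parity of `M`. -/
theorem Superperfect.odd_sigma_one {n : ℕ} (h : Superperfect n) (hn : Odd n) : Odd (σ 1 n) := by
  by_contra hσodd
  obtain ⟨k, m, hm, hσ⟩ := exists_eq_two_pow_mul_odd (sigma_pos 1 n hn.pos.ne').ne'
  have hk : k ≠ 0 := by rintro rfl; exact hσodd (by rwa [hσ, pow_zero, one_mul])
  set M := mersenne (k + 1)
  have hM : M * σ 1 m = 2 * n := by rw [← sigma_one_two_pow_mul hm, ← hσ]; exact h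
  have hModd : Odd M := mersenne_odd.2 (succ_ne_zero k)
  obtain ⟨q, rfl⟩ : M ∣ n := hModd.coprime_two_right.dvd_of_dvd_mul_left (Dvd.intro _ hM)
  have hM1 : 1 < M := one_lt_mersenne.2 (by omega)
  have hσm : σ 1 m = 2 * q := by
    rw [mul_left_comm] at hM
    exact Nat.eq_of_mul_eq_mul_left (by omega) hM
  have hm1 : m = 1 := by
    have hσn : 2 ^ k * (2 * q) ≤ 2 ^ k * m := by
      have hsucc : M + 1 = 2 ^ (k + 1) := succ_mersenne _
      have := add_div_le_sigma_one (dvd_mul_right M q) hM1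
      rw [Nat.mul_div_cancel_left q (by omega), hσ] at this
      calc 2 ^ k * (2 * q) = (M + 1) * q := by rw [hsucc, pow_succ]; ring
        _ ≤ 2 ^ k * m := by linarith
    have hσm_le : σ 1 m ≤ m := hσm ▸ Nat.le_of_mul_le_mul_left hσn (by positivity)
    by_contra hm1
    have := add_div_le_sigma_one (dvd_refl m) (lt_of_le_of_ne hm.pos (Ne.symm hm1))
    rw [Nat.div_self hm.pos] at this
    omega
  rw [hm1, sigma_one, mul_one] at hM
  exact (not_even_iff_odd.2 hModd) (hM ▸ even_two_mul _)

end Nat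

theorem odd_superperfect_is_square_general (n : ℕ) (hodd : Odd n)
    (h : (∑ d ∈ Nat.divisors (∑ d ∈ Nat.divisors n, d), d) = 2 * n) :
    ∃ m : ℕ, n = m ^ 2 := by
  have hsp : Nat.Superperfect n := by simpa only [Nat.Superperfect, sigma_one_apply] using h
  exact Nat.exists_eq_sq_of_odd_card_divisors
    (Nat.odd_card_divisors_of_odd_sigma_one hodd (hsp.odd_sigma_one hodd))

/-- Every odd superperfect number is a perfect square. -/
theorem odd_superperfect_is_square (n : ℕ) (hn : 0 < n) (hodd : Odd n)
    (h : (∑ d ∈ Nat.divisors (∑ d ∈ Nat.divisors n, d), d) = 2 * n) :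
    ∃ m : ℕ, n = m ^ 2 :=
  odd_superperfect_is_square_general n hodd h
end
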